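/- Fix U ∈ ℝ. For every ε > 0 there exists R > 0 such that for every k ∈ ℂ with Re k ≥ 1/4, Im k ≤ 0 and |k| ≥ R, the complex number s(k) = 1 + 1/k − U²/k³ does not lie in the closed negative real axis (−∞, 0], and, defining ω_±(k) = (U ± k²·√(s(k)))/(1 + 1/k) with the principal branch of the complex square root, one has |ω_+(k) − (k² − k/2 + U + 3/8)| < ε and |ω_−(k) − (−k² + k/2 + U − 3/8)| < ε. -/

import Mathlib

/-- The radicand `s(k) = 1 + 1/k − U²/k³`. -/
noncomputable def plateRad (U : ℝ) (k : ℂ) : ℂ := 1 + 1 / k - (U : ℂ) ^ 2 / k ^ 3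

/-- The dispersion root `ω₊(k) = (U + k²√(s(k)))/(1+1/k)` (principal branch). -/
noncomputable def plateOmegaPC (U : ℝ) (k : ℂ) : ℂ :=
  ((U : ℂ) + k ^ 2 * plateRad U k ^ ((1 : ℂ) / 2)) / (1 + 1 / k)

/-- The dispersion root `ω₋(k) = (U − k²√(s(k)))/(1+1/k)` (principal branch). -/
noncomputable def plateOmegaMC (U : ℝ) (k : ℂ) : ℂ :=
  ((U : ℂ) - k ^ 2 * plateRad U k ^ ((1 : ℂ) / 2)) / (1 + 1 / k)

/-! Write `w = √s(k)` and `A = k² + k/2 − 1/8`. Then `k⁴s(k) − A² = k(1/8 − U²) − 1/64` is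
`O(‖k‖)`, while `w` is close to `1`, so `‖k²w + A‖ ≥ ‖k‖²`; dividing, `k²w − A = O(1/‖k‖)`.
Clearing the denominator `1 + 1/k` gives
`(ω_± − (±k² ∓ k/2 + U ± 3/8))(k + 1) = ±k(k²w − A) + O(1)`, so both errors are `O(1/‖k‖)`.
Closeness of `s(k)` to `1` also keeps it off the negative real axis. -/

namespace Complex

lemma cpow_one_div_two_sq (z : ℂ) : (z ^ ((1 : ℂ) / 2)) ^ 2 = z := by
  rw [one_div]; exact cpow_ofNat_inv_pow z 2

lemma re_cpow_one_div_two_nonneg (z : ℂ) : 0 ≤ (z ^ ((1 : ℂ) / 2)).re := by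
  rw [one_div, cpow_inv_two_re]; exact Real.sqrt_nonneg _

-- `(√z − 1)(√z + 1) = z − 1` and `Re (√z + 1) ≥ 1`.
lemma norm_cpow_one_div_two_sub_one_le (z : ℂ) : ‖z ^ ((1 : ℂ) / 2) - 1‖ ≤ ‖z - 1‖ := by
  set w := z ^ ((1 : ℂ) / 2)
  have hfactor : (w - 1) * (w + 1) = z - 1 := by
    linear_combination cpow_one_div_two_sq z
  have hplus : 1 ≤ ‖w + 1‖ := by
    calc (1 : ℝ) ≤ (w + 1).re := by
          rw [add_re, one_re]; linarith [re_cpow_one_div_two_nonneg z]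
      _ ≤ ‖w + 1‖ := re_le_norm _
  calc ‖w - 1‖ ≤ ‖w - 1‖ * ‖w + 1‖ := le_mul_of_one_le_right (norm_nonneg _) hplus
    _ = ‖z - 1‖ := by rw [← norm_mul, hfactor]

lemma re_pos_of_norm_sub_one_lt_one {z : ℂ} (hz : ‖z - 1‖ < 1) : 0 < z.re := by
  have h := (abs_re_le_norm (z - 1)).trans_lt hz
  rw [sub_re, one_re, abs_lt] at h
  linarith [h.1]

lemma norm_le_two_mul_div_of_mul_add_one_eq {x y k : ℂ} (hk : 2 ≤ ‖k‖)
    (h : x * (k + 1) = y) : ‖x‖ ≤ 2 * ‖y‖ / ‖k‖ := by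
  have hk1 : ‖k‖ / 2 ≤ ‖k + 1‖ := by
    have := norm_sub_norm_le k (-1)
    rw [norm_neg, norm_one, sub_neg_eq_add] at this
    linarith
  rw [le_div_iff₀ (by linarith), ← h, norm_mul]
  nlinarith [norm_nonneg x]

lemma add_one_ne_zero_of_one_lt_norm {k : ℂ} (hk : 1 < ‖k‖) : k + 1 ≠ 0 := fun h => by
  rw [eq_neg_of_add_eq_zero_left h, norm_neg, norm_one] at hk
  exact lt_irrefl 1 hk

end Complex

open Complex

section Asymptotics

variable (U : ℝ) {k : ℂ}

lemma norm_plateRad_sub_one_le (hk : 1 ≤ ‖k‖) : ‖plateRad U k - 1‖ ≤ (1 + U ^ 2) / ‖k‖ := by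
  have hk0 : 0 < ‖k‖ := by linarith
  have hcube : U ^ 2 / ‖k‖ ^ 3 ≤ U ^ 2 / ‖k‖ :=
    div_le_div_of_nonneg_left (sq_nonneg U) hk0 (le_self_pow₀ hk (by norm_num))
  calc ‖plateRad U k - 1‖ = ‖1 / k - (U : ℂ) ^ 2 / k ^ 3‖ := by rw [plateRad]; ring_nf
    _ ≤ ‖1 / k‖ + ‖(U : ℂ) ^ 2 / k ^ 3‖ := norm_sub_le _ _
    _ = 1 / ‖k‖ + U ^ 2 / ‖k‖ ^ 3 := by simp [norm_pow]
    _ ≤ (1 + U ^ 2) / ‖k‖ := by rw [add_div]; linarith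

lemma eight_le_norm_of_le (hk : 8 * (1 + U ^ 2) ≤ ‖k‖) : 8 ≤ ‖k‖ := by
  nlinarith [sq_nonneg U]

lemma norm_plateRad_sub_one_le_one_div_eight (hk : 8 * (1 + U ^ 2) ≤ ‖k‖) :
    ‖plateRad U k - 1‖ ≤ 1 / 8 := by
  have hr8 := eight_le_norm_of_le U hk
  refine (norm_plateRad_sub_one_le U (by linarith)).trans ?_
  rw [div_le_div_iff₀ (by linarith) (by norm_num)]
  linarith

lemma pow_four_mul_plateRad_sub_sq (hk : k ≠ 0) :
    k ^ 4 * plateRad U k - (k ^ 2 + k / 2 - 1 / 8) ^ 2 = k * (1 / 8 - (U : ℂ) ^ 2) - 1 / 64 := by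
  rw [plateRad]; field_simp; ring

lemma norm_mul_sq_mul_sqrt_plateRad_sub_le (hk : 8 * (1 + U ^ 2) ≤ ‖k‖) :
    ‖k * (k ^ 2 * plateRad U k ^ ((1 : ℂ) / 2) - (k ^ 2 + k / 2 - 1 / 8))‖ ≤ 1 + U ^ 2 := by
  set r := ‖k‖
  set w := plateRad U k ^ ((1 : ℂ) / 2)
  set A := k ^ 2 + k / 2 - 1 / 8
  have hr8 : 8 ≤ r := eight_le_norm_of_le U hk
  have hk0 : k ≠ 0 := norm_pos_iff.mp (by linarith)
  have hw : ‖w - 1‖ ≤ 1 / 8 :=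
    (norm_cpow_one_div_two_sub_one_le _).trans (norm_plateRad_sub_one_le_one_div_eight U hk)
  have hsum : r ^ 2 ≤ ‖k ^ 2 * w + A‖ := by
    have hexpand : (k ^ 2 * w + A) - k ^ 2 * (w - 1) - k / 2 + 1 / 8 = 2 * k ^ 2 := by ring
    have h : 2 * r ^ 2 ≤ ‖k ^ 2 * w + A‖ + r ^ 2 * ‖w - 1‖ + r / 2 + 1 / 8 :=
      calc 2 * r ^ 2 = ‖(k ^ 2 * w + A) - k ^ 2 * (w - 1) - k / 2 + 1 / 8‖ := by
            rw [hexpand, norm_mul, norm_pow, RCLike.norm_ofNat]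
        _ ≤ ‖k ^ 2 * w + A‖ + ‖k ^ 2 * (w - 1)‖ + ‖k / 2‖ + ‖(1 : ℂ) / 8‖ :=
            (norm_add_le _ _).trans <| add_le_add_left
              ((norm_sub_le _ _).trans <| add_le_add_left (norm_sub_le _ _) _) _
        _ = _ := by simp [r, norm_pow]
    nlinarith [mul_le_mul_of_nonneg_left hw (sq_nonneg r)]
  have hprod : (k ^ 2 * w - A) * (k ^ 2 * w + A) = k * (1 / 8 - (U : ℂ) ^ 2) - 1 / 64 := by
    rw [← pow_four_mul_plateRad_sub_sq U hk0, ← cpow_one_div_two_sq (plateRad U k)]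
    ring
  have hU : ‖(1 / 8 : ℂ) - (U : ℂ) ^ 2‖ ≤ 1 / 8 + U ^ 2 :=
    (norm_sub_le _ _).trans (by simp [norm_pow])
  have hrhs : ‖k * (1 / 8 - (U : ℂ) ^ 2) - 1 / 64‖ ≤ r * (1 / 8 + U ^ 2) + 1 / 64 :=
    (norm_sub_le _ _).trans (by rw [norm_mul]; gcongr; norm_num)
  have hdiff : ‖k ^ 2 * w - A‖ * r ^ 2 ≤ r * (1 / 8 + U ^ 2) + 1 / 64 :=
    calc ‖k ^ 2 * w - A‖ * r ^ 2 ≤ ‖k ^ 2 * w - A‖ * ‖k ^ 2 * w + A‖ := by gcongr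
      _ = _ := by rw [← norm_mul, hprod]
      _ ≤ _ := hrhs
  rw [norm_mul]
  nlinarith [norm_nonneg (k ^ 2 * w - A)]

lemma plateOmegaPC_sub_mul_add_one (hk : k ≠ 0) (hk1 : k + 1 ≠ 0) :
    (plateOmegaPC U k - (k ^ 2 - k / 2 + (U : ℂ) + 3 / 8)) * (k + 1) =
      k * (k ^ 2 * plateRad U k ^ ((1 : ℂ) / 2) - (k ^ 2 + k / 2 - 1 / 8)) - (U + 3 / 8) := by
  have : 1 + 1 / k = (k + 1) / k := by field_simp
  rw [plateOmegaPC, this]; field_simp; ring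

lemma plateOmegaMC_sub_mul_add_one (hk : k ≠ 0) (hk1 : k + 1 ≠ 0) :
    (plateOmegaMC U k - (-k ^ 2 + k / 2 + (U : ℂ) - 3 / 8)) * (k + 1) =
      -(k * (k ^ 2 * plateRad U k ^ ((1 : ℂ) / 2) - (k ^ 2 + k / 2 - 1 / 8)) + (U - 3 / 8)) := by
  have : 1 + 1 / k = (k + 1) / k := by field_simp
  rw [plateOmegaMC, this]; field_simp; ring

lemma norm_le_div_of_mul_add_one_eq (hk : 8 * (1 + U ^ 2) ≤ ‖k‖) {x y : ℂ} (hxy : x * (k + 1) = y)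
    (hy : ‖y‖ ≤ ‖k * (k ^ 2 * plateRad U k ^ ((1 : ℂ) / 2) - (k ^ 2 + k / 2 - 1 / 8))‖
      + (|U| + 3 / 8)) :
    ‖x‖ ≤ 2 * (U ^ 2 + |U| + 2) / ‖k‖ := by
  refine (norm_le_two_mul_div_of_mul_add_one_eq
    (by linarith [eight_le_norm_of_le U hk]) hxy).trans ?_
  have := norm_mul_sq_mul_sqrt_plateRad_sub_le U hk
  gcongr
  linarith

lemma norm_plateOmegaPC_sub_le (hk : 8 * (1 + U ^ 2) ≤ ‖k‖) :
    ‖plateOmegaPC U k - (k ^ 2 - k / 2 + (U : ℂ) + 3 / 8)‖ ≤ 2 * (U ^ 2 + |U| + 2) / ‖k‖ := by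
  have hr8 := eight_le_norm_of_le U hk
  refine norm_le_div_of_mul_add_one_eq U hk (plateOmegaPC_sub_mul_add_one U
    (norm_pos_iff.mp (by linarith)) (add_one_ne_zero_of_one_lt_norm (by linarith))) ?_
  refine (norm_sub_le _ _).trans ?_
  gcongr
  exact (norm_add_le _ _).trans (by simp)

lemma norm_plateOmegaMC_sub_le (hk : 8 * (1 + U ^ 2) ≤ ‖k‖) :
    ‖plateOmegaMC U k - (-k ^ 2 + k / 2 + (U : ℂ) - 3 / 8)‖ ≤ 2 * (U ^ 2 + |U| + 2) / ‖k‖ := by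
  have hr8 := eight_le_norm_of_le U hk
  refine norm_le_div_of_mul_add_one_eq U hk (plateOmegaMC_sub_mul_add_one U
    (norm_pos_iff.mp (by linarith)) (add_one_ne_zero_of_one_lt_norm (by linarith))) ?_
  rw [norm_neg]
  refine (norm_add_le _ _).trans ?_
  gcongr
  exact (norm_sub_le _ _).trans (by simp)

end Asymptotics

/-- asymptotics of the dispersion roots in the domain
`D = {k : Re k ≥ 1/4, Im k ≤ 0}`: for every `ε > 0` there is `R > 0` so that for `|k| ≥ R`
in `D`, the radicand `s(k)` avoids `(−∞, 0]` and
`|ω₊(k) − (k² − k/2 + U + 3/8)| < ε`, `|ω₋(k) − (−k² + k/2 + U − 3/8)| < ε`. -/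
theorem omega_asymptotics_complex (U : ℝ) :
    ∀ ε : ℝ, 0 < ε → ∃ R : ℝ, 0 < R ∧ ∀ k : ℂ,
      1 / 4 ≤ k.re → k.im ≤ 0 → R ≤ ‖k‖ →
      (¬ ((plateRad U k).im = 0 ∧ (plateRad U k).re ≤ 0))
      ∧ ‖plateOmegaPC U k - (k ^ 2 - k / 2 + (U : ℂ) + 3 / 8)‖ < ε
      ∧ ‖plateOmegaMC U k - (-k ^ 2 + k / 2 + (U : ℂ) - 3 / 8)‖ < ε := by
  intro ε hε
  set B := U ^ 2 + |U| + 2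
  refine ⟨max (8 * (1 + U ^ 2)) (4 * B / ε), by positivity, fun k _ _ hR => ?_⟩
  have hk : 8 * (1 + U ^ 2) ≤ ‖k‖ := (le_max_left _ _).trans hR
  have hsmall : 2 * B / ‖k‖ < ε := by
    have h4B : 4 * B ≤ ε * ‖k‖ := (div_le_iff₀' hε).mp ((le_max_right _ _).trans hR)
    rw [div_lt_iff₀ (by linarith [eight_le_norm_of_le U hk])]
    linarith [show 0 < B by positivity]
  refine ⟨fun ⟨_, hre⟩ => hre.not_gt (re_pos_of_norm_sub_one_lt_one ?_),
    (norm_plateOmegaPC_sub_le U hk).trans_lt hsmall,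
    (norm_plateOmegaMC_sub_le U hk).trans_lt hsmall⟩
  linarith [norm_plateRad_sub_one_le_one_div_eight U hk]
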